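/- If a complex manifold X is strongly dominable by LSAP manifolds (i.e., for every point x ∈ X there exist a complex manifold Y satisfying LSAP, a holomorphic map h: Y → X, and a point y ∈ Y with h(y) = x and dh_y: T_y Y → T_x X surjective), then X is an LSAP manifold. In particular, if Z is an LSAP manifold and Z → X is a surjective holomorphic submersion, then X is an LSAP manifold. -/

import Mathlib

open scoped Manifold Topology
open Set Asymptotics

noncomputable section

/-- A compact topological disc in `ℂ` with piecewise smooth boundary. -/
def IsCompactPSDisc (D : Set ℂ) : Prop :=
  IsCompact D ∧ Nonempty ((Metric.closedBall (0:ℂ) 1 : Set ℂ) ≃ₜ D) ∧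
  ∃ (m : ℕ) (γ : Fin m → ℝ → ℂ), (∀ i, ContDiffOn ℝ 1 (γ i) (Icc 0 1)) ∧
    frontier D = ⋃ i, γ i '' Icc (0:ℝ) 1

/-- A special pair of compact discs `D ⊆ D' ⊆ ℂ`: both have piecewise smooth boundaries and
`D' ∖ D̊` is a disc attached to `D` along an arc in `bD`. -/
def SpecialDiscPair (D D' : Set ℂ) : Prop :=
  IsCompactPSDisc D ∧ IsCompactPSDisc D' ∧ D ⊆ D' ∧
  IsCompactPSDisc (closure (D' \ D)) ∧
  ∃ γ : ℝ → ℂ, ContinuousOn γ (Icc 0 1) ∧ InjOn γ (Icc 0 1) ∧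
    closure (D' \ D) ∩ D = γ '' Icc (0:ℝ) 1 ∧ γ '' Icc (0:ℝ) 1 ⊆ frontier D

/-- A complex manifold `X` has the local spray approximation property (LSAP) at `x ∈ X` if
there is a neighbourhood `V ∋ x` such that, for every special pair of compact discs
`D ⊆ D' ⊆ ℂ` and every holomorphic spray `F : D × 𝔹^N → V`, there is `r ∈ (0,1)` such that
`F` can be approximated uniformly on `D × r𝔹̄^N` by holomorphic sprays `D' × r𝔹̄^N → X`. -/
def HasLSAPAt {E H X : Type*} [NormedAddCommGroup E] [NormedSpace ℂ E] [TopologicalSpace H]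
    (I : ModelWithCorners ℂ E H) [MetricSpace X] [ChartedSpace H X] (x : X) : Prop :=
  ∃ V : Set X, IsOpen V ∧ x ∈ V ∧
    ∀ D D' : Set ℂ, SpecialDiscPair D D' →
    ∀ (N : ℕ) (F : ℂ × EuclideanSpace ℂ (Fin N) → X) (Ω : Set (ℂ × EuclideanSpace ℂ (Fin N))),
      IsOpen Ω → D ×ˢ Metric.ball (0 : EuclideanSpace ℂ (Fin N)) 1 ⊆ Ω →
      MDifferentiableOn 𝓘(ℂ, ℂ × EuclideanSpace ℂ (Fin N)) I F Ω →
      (∀ p ∈ Ω, F p ∈ V) →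
      ∃ r : ℝ, 0 < r ∧ r < 1 ∧
        ∀ ε : ℝ, 0 < ε →
          ∃ (G : ℂ × EuclideanSpace ℂ (Fin N) → X) (Ω' : Set (ℂ × EuclideanSpace ℂ (Fin N))),
            IsOpen Ω' ∧ D' ×ˢ Metric.closedBall (0 : EuclideanSpace ℂ (Fin N)) r ⊆ Ω' ∧
            MDifferentiableOn 𝓘(ℂ, ℂ × EuclideanSpace ℂ (Fin N)) I G Ω' ∧
            ∀ p ∈ D ×ˢ Metric.closedBall (0 : EuclideanSpace ℂ (Fin N)) r,
              dist (F p) (G p) < ε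

/-- A complex manifold has LSAP if it has LSAP at every point. -/
def HasLSAP {E H X : Type*} [NormedAddCommGroup E] [NormedSpace ℂ E] [TopologicalSpace H]
    (I : ModelWithCorners ℂ E H) [MetricSpace X] [ChartedSpace H X] : Prop :=
  ∀ x : X, HasLSAPAt I x

/-- An Oka manifold: every holomorphic map to `X` from a neighbourhood of a compact convex
set `K ⊆ ℂⁿ` can be approximated uniformly on `K` by entire holomorphic maps `ℂⁿ → X`. -/
def IsOkaManifold {E H X : Type*} [NormedAddCommGroup E] [NormedSpace ℂ E] [TopologicalSpace H]
    (I : ModelWithCorners ℂ E H) [MetricSpace X] [ChartedSpace H X] : Prop :=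
  ∀ (n : ℕ) (K : Set (EuclideanSpace ℂ (Fin n))), IsCompact K → Convex ℝ K →
  ∀ U : Set (EuclideanSpace ℂ (Fin n)), IsOpen U → K ⊆ U →
  ∀ f : EuclideanSpace ℂ (Fin n) → X,
    MDifferentiableOn 𝓘(ℂ, EuclideanSpace ℂ (Fin n)) I f U →
  ∀ ε : ℝ, 0 < ε →
    ∃ g : EuclideanSpace ℂ (Fin n) → X,
      MDifferentiable 𝓘(ℂ, EuclideanSpace ℂ (Fin n)) I g ∧ ∀ x ∈ K, dist (f x) (g x) < ε

/-- A witness that `X` is dominated at the point `x` by an LSAP manifold: an LSAP manifold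
`Y`, a holomorphic map `f : Y → X` and a point `y ∈ Y` with `f y = x` at which `f` is a
submersion. -/
structure LSAPDominationAt (n : ℕ) (X : Type*) [MetricSpace X]
    [ChartedSpace (EuclideanSpace ℂ (Fin n)) X]
    [IsManifold 𝓘(ℂ, EuclideanSpace ℂ (Fin n)) (⊤ : ℕ∞) X] (x : X) where
  m : ℕ
  Y : Type
  [iY : MetricSpace Y]
  [cY : ChartedSpace (EuclideanSpace ℂ (Fin m)) Y]
  [sY : IsManifold 𝓘(ℂ, EuclideanSpace ℂ (Fin m)) (⊤ : ℕ∞) Y]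
  lsap : HasLSAP (X := Y) 𝓘(ℂ, EuclideanSpace ℂ (Fin m))
  f : Y → X
  y : Y
  holo : MDifferentiable 𝓘(ℂ, EuclideanSpace ℂ (Fin m)) 𝓘(ℂ, EuclideanSpace ℂ (Fin n)) f
  eq : f y = x
  subm : Function.Surjective
    (mfderiv 𝓘(ℂ, EuclideanSpace ℂ (Fin m)) 𝓘(ℂ, EuclideanSpace ℂ (Fin n)) f y)


section Aux

open Metric Function
open scoped NNReal

/-- Continuity-type estimate for the derivative of a complex-differentiable map in several
variables, via the one-variable Cauchy estimate applied to differences along complex lines. -/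
lemma fderiv_near_of_differentiableOn {Em En : Type*} [NormedAddCommGroup Em] [NormedSpace ℂ Em]
    [NormedAddCommGroup En] [NormedSpace ℂ En] [CompleteSpace En] [ProperSpace Em]
    {g : Em → En} {U : Set Em} (hU : IsOpen U) (hg : DifferentiableOn ℂ g U)
    {c : Em} (hc : c ∈ U) {ε : ℝ} (hε : 0 < ε) :
    ∃ δ > 0, ball c δ ⊆ U ∧ ∀ w ∈ ball c δ, ‖fderiv ℂ g w - fderiv ℂ g c‖ ≤ ε := by
  obtain ⟨ρ', hρ'pos, hρ'⟩ := Metric.isOpen_iff.1 hU c hc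
  set ρ : ℝ := ρ' / 4 with hρdef
  have hρ : 0 < ρ := by positivity
  have hball3 : closedBall c (3 * ρ) ⊆ U := by
    intro z hz
    apply hρ'
    rw [mem_closedBall] at hz
    rw [mem_ball]
    calc dist z c ≤ 3 * ρ := hz
    _ < ρ' := by rw [hρdef]; linarith
  have hgdiffAt : ∀ z ∈ closedBall c (3 * ρ), DifferentiableAt ℂ g z := fun z hz =>
    hg.differentiableAt (hU.mem_nhds (hball3 hz))
  -- uniform continuity of g on the compact ball
  have hKc : IsCompact (closedBall c (3 * ρ)) := isCompact_closedBall _ _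
  have hgc : ContinuousOn g (closedBall c (3 * ρ)) :=
    (hg.continuousOn).mono hball3
  have hUC := hKc.uniformContinuousOn_of_continuous hgc
  rw [Metric.uniformContinuousOn_iff] at hUC
  obtain ⟨δ₀, hδ₀pos, hδ₀⟩ := hUC (ε * ρ) (by positivity)
  refine ⟨min δ₀ ρ, lt_min hδ₀pos hρ, ?_, ?_⟩
  · intro z hz
    apply hball3
    rw [mem_ball] at hz
    rw [mem_closedBall]
    have : dist z c < ρ := lt_of_lt_of_le hz (min_le_right _ _)
    nlinarith [hρ.le]
  intro w hw
  rw [mem_ball] at hw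
  have hwρ : dist w c < ρ := lt_of_lt_of_le hw (min_le_right _ _)
  set A : Em →L[ℂ] En := fderiv ℂ g w - fderiv ℂ g c with hA
  refine ContinuousLinearMap.opNorm_le_bound _ hε.le fun e => ?_
  rcases eq_or_ne e 0 with rfl | he
  · simp
  -- unit vector in the direction of `e`
  set u : Em := ‖e‖⁻¹ • e with hu
  have hnu : ‖u‖ = 1 := by
    rw [hu, norm_smul, norm_inv, norm_norm, inv_mul_cancel₀ (norm_ne_zero_iff.2 he)]
  -- the difference function along the complex line through direction u
  set h : ℂ → En := fun z => g (w + z • u) - g (c + z • u) with hh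
  have hmem : ∀ (b : Em), dist b c < ρ → ∀ z : ℂ, ‖z‖ ≤ 2 * ρ →
      b + z • u ∈ closedBall c (3 * ρ) := by
    intro b hb z hzn
    rw [mem_closedBall]
    calc dist (b + z • u) c ≤ dist (b + z • u) b + dist b c := dist_triangle _ _ _
      _ ≤ ‖z • u‖ + ρ := by
          rw [dist_eq_norm, add_sub_cancel_left]
          exact add_le_add le_rfl hb.le
      _ ≤ 2 * ρ + ρ := by
          rw [norm_smul, hnu, mul_one]
          exact add_le_add hzn le_rfl
      _ = 3 * ρ := by ring
  have hdiffAt : ∀ z : ℂ, ‖z‖ ≤ 2 * ρ → DifferentiableAt ℂ h z := by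
    intro z hz
    have h1 : DifferentiableAt ℂ (fun z : ℂ => g (w + z • u)) z := by
      have := hgdiffAt _ (hmem w hwρ z hz)
      exact this.comp z (by fun_prop)
    have h2 : DifferentiableAt ℂ (fun z : ℂ => g (c + z • u)) z := by
      have := hgdiffAt _ (hmem c (by simpa using hρ) z hz)
      exact this.comp z (by fun_prop)
    exact h1.sub h2
  have hdc : DiffContOnCl ℂ h (ball 0 ρ) := by
    apply DifferentiableOn.diffContOnCl
    rw [closure_ball (0:ℂ) hρ.ne']
    intro z hz
    rw [mem_closedBall, dist_zero_right] at hz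
    exact (hdiffAt z (by linarith)).differentiableWithinAt
  have hsphere : ∀ z ∈ sphere (0:ℂ) ρ, ‖h z‖ ≤ ε * ρ := by
    intro z hz
    rw [mem_sphere, dist_zero_right] at hz
    have hm1 : w + z • u ∈ closedBall c (3 * ρ) := hmem w hwρ z (by rw [hz]; linarith)
    have hm2 : c + z • u ∈ closedBall c (3 * ρ) := hmem c (by simpa using hρ) z (by rw [hz]; linarith)
    have hdistlt : dist (w + z • u) (c + z • u) < δ₀ := by
      rw [dist_eq_norm]
      have : w + z • u - (c + z • u) = w - c := by abel
      rw [this, ← dist_eq_norm]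
      exact lt_of_lt_of_le hw (min_le_left _ _)
    have := hδ₀ _ hm1 _ hm2 hdistlt
    rw [hh]
    simpa [dist_eq_norm] using this.le
  -- compute deriv h 0 = A u
  have hderiv : HasDerivAt h (fderiv ℂ g w u - fderiv ℂ g c u) 0 := by
    have key : ∀ b : Em, dist b c < ρ →
        HasDerivAt (fun z : ℂ => g (b + z • u)) (fderiv ℂ g b u) 0 := by
      intro b hb
      have hline : HasDerivAt (fun z : ℂ => b + z • u) u 0 := by
        simpa using ((hasDerivAt_id (0:ℂ)).smul_const u).const_add b
      have hgb : HasFDerivAt g (fderiv ℂ g b) (b + (0:ℂ) • u) := by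
        simpa using (hgdiffAt b (by rw [mem_closedBall]; nlinarith [hρ.le])).hasFDerivAt
      simpa [Function.comp_def] using hgb.comp_hasDerivAt 0 hline
    exact (key w hwρ).sub (key c (by simpa using hρ))
  have hbound := Complex.norm_deriv_le_of_forall_mem_sphere_norm_le hρ hdc hsphere
  rw [hderiv.deriv] at hbound
  have hAu : ‖A u‖ ≤ ε := by
    have : ε * ρ / ρ = ε := by field_simp
    rw [hA, ContinuousLinearMap.sub_apply]
    rw [this] at hbound
    exact hbound
  -- scale back
  have he' : e = ‖e‖ • u := by
    rw [hu, smul_smul, mul_inv_cancel₀ (norm_ne_zero_iff.2 he), one_smul]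
  calc ‖A e‖ = ‖A (‖e‖ • u)‖ := by rw [← he']
    _ = ‖e‖ * ‖A u‖ := by rw [A.map_smul_of_tower, norm_smul, norm_norm]
    _ ≤ ‖e‖ * ε := by
        exact mul_le_mul_of_nonneg_left hAu (norm_nonneg _)
    _ = ε * ‖e‖ := mul_comm _ _

set_option maxHeartbeats 1000000 in
/-- Local holomorphic section of a holomorphic map whose derivative at `c` is surjective. -/
lemma exists_local_holomorphic_section {Em En : Type*} [NormedAddCommGroup Em] [NormedSpace ℂ Em]
    [NormedAddCommGroup En] [NormedSpace ℂ En] [FiniteDimensional ℂ Em] [FiniteDimensional ℂ En]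
    {g : Em → En} {U : Set Em} (hU : IsOpen U) (hg : DifferentiableOn ℂ g U)
    {c : Em} (hc : c ∈ U) (hsurj : Function.Surjective (fderiv ℂ g c)) :
    ∃ (W : Set En) (σ : En → Em), IsOpen W ∧ g c ∈ W ∧ σ (g c) = c ∧
      ∀ v ∈ W, σ v ∈ U ∧ g (σ v) = v ∧ DifferentiableAt ℂ σ v := by
  set L : Em →L[ℂ] En := fderiv ℂ g c with hLdef
  obtain ⟨Rl, hRl⟩ := (L : Em →ₗ[ℂ] En).exists_rightInverse_of_surjective
    (LinearMap.range_eq_top.2 hsurj)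
  set R : En →L[ℂ] Em := LinearMap.toContinuousLinearMap Rl with hRdef
  have hLR : ∀ v, L (R v) = v := fun v => LinearMap.congr_fun hRl v
  have hRnorm : (0:ℝ) < ‖R‖ + 1 := by positivity
  obtain ⟨δ, hδpos, hδU, hδ⟩ := fderiv_near_of_differentiableOn hU hg hc
    (ε := (2 * (‖R‖ + 1))⁻¹) (by positivity)
  set δ' : ℝ := δ / (‖R‖ + 1) with hδ'def
  have hδ'pos : 0 < δ' := by positivity
  set a : En := g c with hadef
  set Ψ : En → En := fun v => g (c + R (v - a)) with hΨdef
  have hΨa : Ψ a = a := by simp [hΨdef, hadef]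
  -- points of the small ball map into ball c δ
  have hmem : ∀ v ∈ ball a δ', c + R (v - a) ∈ ball c δ := by
    intro v hv
    rw [mem_ball] at hv ⊢
    rw [dist_eq_norm, add_sub_cancel_left]
    calc ‖R (v - a)‖ ≤ ‖R‖ * ‖v - a‖ := R.le_opNorm _
      _ ≤ ‖R‖ * δ' := by
          apply mul_le_mul_of_nonneg_left _ (norm_nonneg R)
          rw [← dist_eq_norm]; exact hv.le
      _ < (‖R‖ + 1) * δ' := by nlinarith
      _ = δ := by rw [hδ'def]; field_simp
  have hΨderiv : ∀ v ∈ ball a δ',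
      HasFDerivAt Ψ ((fderiv ℂ g (c + R (v - a))).comp R) v := by
    intro v hv
    have hw := hmem v hv
    have hgat : HasFDerivAt g (fderiv ℂ g (c + R (v - a))) (c + R (v - a)) :=
      (hg.differentiableAt (hU.mem_nhds (hδU hw))).hasFDerivAt
    have haff : HasFDerivAt (fun v : En => c + R (v - a)) R v := by
      simpa using ((R.hasFDerivAt.comp v ((hasFDerivAt_id v).sub_const a)).const_add c)
    simpa [hΨdef, Function.comp_def] using hgat.comp v haff
  have hbound : ∀ v ∈ ball a δ',
      ‖(fderiv ℂ g (c + R (v - a))).comp R - ContinuousLinearMap.id ℂ En‖ ≤ 1/2 := by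
    intro v hv
    have hid : (ContinuousLinearMap.id ℂ En) = L.comp R := by
      ext w; simp [hLR w]
    rw [hid, ← ContinuousLinearMap.sub_comp]
    calc ‖(fderiv ℂ g (c + R (v - a)) - L).comp R‖
        ≤ ‖fderiv ℂ g (c + R (v - a)) - L‖ * ‖R‖ := ContinuousLinearMap.opNorm_comp_le _ _
      _ ≤ (2 * (‖R‖ + 1))⁻¹ * ‖R‖ := by
          apply mul_le_mul_of_nonneg_right _ (norm_nonneg _)
          rw [hLdef]
          exact hδ _ (hmem v hv)
      _ ≤ 1/2 := by
          rw [inv_mul_le_iff₀ (by positivity)]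
          nlinarith [norm_nonneg R]
  have happrox : ApproximatesLinearOn Ψ
      (((ContinuousLinearEquiv.refl ℂ En) : En ≃L[ℂ] En) : En →L[ℂ] En)
      (ball a δ') (1/2 : ℝ≥0) := by
    intro x hx y hy
    have := Convex.norm_image_sub_le_of_norm_hasFDerivWithin_le'
      (f := Ψ) (f' := fun v => (fderiv ℂ g (c + R (v - a))).comp R)
      (φ := ContinuousLinearMap.id ℂ En) (C := 1/2)
      (fun v hv => (hΨderiv v hv).hasFDerivWithinAt) hbound (convex_ball a δ') hy hx
    simpa using this
  have hc' : Subsingleton En ∨ (1/2 : ℝ≥0) <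
      (‖(((ContinuousLinearEquiv.refl ℂ En).symm :
        En ≃L[ℂ] En) : En →L[ℂ] En)‖₊)⁻¹ := by
    rcases subsingleton_or_nontrivial En with h | h
    · exact Or.inl h
    · right
      simp only [ContinuousLinearEquiv.refl_symm, ContinuousLinearEquiv.coe_refl,
        ContinuousLinearMap.nnnorm_id]
      rw [← NNReal.coe_lt_coe]
      norm_num
  set Φ : OpenPartialHomeomorph En En :=
    happrox.toOpenPartialHomeomorph Ψ (ball a δ') hc' isOpen_ball with hΦdef
  have hΦcoe : ∀ v, Φ v = Ψ v := fun v => by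
    rw [hΦdef, ApproximatesLinearOn.toOpenPartialHomeomorph_coe]
  have hΦsource : Φ.source = ball a δ' := by
    rw [hΦdef, ApproximatesLinearOn.toOpenPartialHomeomorph_source]
  have hasource : a ∈ Φ.source := by rw [hΦsource]; exact mem_ball_self hδ'pos
  have haW : a ∈ Φ.target := by
    have := Φ.map_source hasource
    rwa [show Φ a = a by rw [hΦcoe a, hΨa]] at this
  have hsymm_a : Φ.symm a = a := by
    have := Φ.left_inv hasource
    rwa [show Φ a = a by rw [hΦcoe a, hΨa]] at this
  refine ⟨Φ.target, fun v => c + R (Φ.symm v - a), Φ.open_target, haW, ?_, ?_⟩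
  · show c + R (Φ.symm a - a) = c
    rw [hsymm_a]; simp
  intro v hv
  have hu : Φ.symm v ∈ ball a δ' := by
    have := Φ.map_target hv
    rwa [hΦsource] at this
  refine ⟨hδU (hmem _ hu), ?_, ?_⟩
  · show g (c + R (Φ.symm v - a)) = v
    have : Ψ (Φ.symm v) = v := by
      rw [← hΦcoe]; exact Φ.right_inv hv
    exact this
  · -- differentiability of the section at v
    have hbu := hbound _ hu
    have hAnorm : ‖(1 : En →L[ℂ] En) - (fderiv ℂ g (c + R (Φ.symm v - a))).comp R‖ < 1 := by
      rw [norm_sub_rev]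
      have : (1 : En →L[ℂ] En) = ContinuousLinearMap.id ℂ En := rfl
      rw [this]
      linarith
    set unit : (En →L[ℂ] En)ˣ :=
      Units.oneSub ((1 : En →L[ℂ] En) - (fderiv ℂ g (c + R (Φ.symm v - a))).comp R) hAnorm
      with hunitdef
    set eqv : En ≃L[ℂ] En := ContinuousLinearEquiv.ofUnit unit with heqvdef
    have heqv : (eqv : En →L[ℂ] En) = (fderiv ℂ g (c + R (Φ.symm v - a))).comp R := by
      show (unit : En →L[ℂ] En) = _
      rw [hunitdef, Units.val_oneSub, sub_sub_cancel]
    have hΨu : HasFDerivAt Ψ (eqv : En →L[ℂ] En) (Φ.symm v) := by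
      rw [heqv]; exact hΨderiv _ hu
    have hcontsymm : ContinuousAt Φ.symm v := Φ.continuousAt_symm hv
    have hev : ∀ᶠ y' in 𝓝 v, Ψ (Φ.symm y') = y' := by
      filter_upwards [Φ.open_target.mem_nhds hv] with y' hy'
      rw [← hΦcoe]; exact Φ.right_inv hy'
    have hdsymm : HasFDerivAt Φ.symm ((eqv.symm : En →L[ℂ] En)) v :=
      HasFDerivAt.of_local_left_inverse hcontsymm hΨu hev
    have hds : DifferentiableAt ℂ Φ.symm v := hdsymm.differentiableAt
    exact (R.differentiable.differentiableAt.comp v (hds.sub_const a)).const_add c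

lemma exists_forall_dist_image_lt {Y X : Type*} [MetricSpace Y] [MetricSpace X]
    {f : Y → X} (hf : Continuous f) {K : Set Y} (hK : IsCompact K) {ε : ℝ} (hε : 0 < ε) :
    ∃ δ > 0, ∀ a ∈ K, ∀ b, dist a b < δ → dist (f a) (f b) < ε := by
  have hr : ∀ a : Y, ∃ r > 0, ∀ b, dist a b < r → dist (f a) (f b) < ε / 2 := by
    intro a
    obtain ⟨r, hr0, hr⟩ := Metric.continuousAt_iff.1 (hf.continuousAt (x := a)) (ε / 2)
      (by positivity)
    refine ⟨r, hr0, fun b hb => ?_⟩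
    have := hr (x := b) (by rwa [dist_comm])
    rwa [dist_comm]
  choose r hr0 hrp using hr
  obtain ⟨t, htK, hcover⟩ := hK.elim_nhds_subcover (fun a => ball a (r a / 2))
    (fun a _ => ball_mem_nhds a (half_pos (hr0 a)))
  rcases t.eq_empty_or_nonempty with rfl | hne
  · refine ⟨1, one_pos, fun a ha => ?_⟩
    simp only [Finset.notMem_empty, iUnion_of_empty, iUnion_empty, subset_empty_iff] at hcover
    rw [hcover] at ha
    exact absurd ha (notMem_empty a)
  refine ⟨t.inf' hne (fun a => r a / 2), ?_, ?_⟩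
  · obtain ⟨a, ha, hval⟩ := t.exists_mem_eq_inf' hne (fun a => r a / 2)
    rw [hval]
    exact half_pos (hr0 a)
  intro a ha b hab
  obtain ⟨a₀, ha₀, haa₀⟩ := by
    have := hcover ha
    simpa using this
  have h1 : dist a₀ a < r a₀ / 2 := by rwa [dist_comm]
  have h2 : dist a₀ b < r a₀ := by
    calc dist a₀ b ≤ dist a₀ a + dist a b := dist_triangle _ _ _
      _ < r a₀ / 2 + t.inf' hne (fun a => r a / 2) := by exact add_lt_add h1 hab
      _ ≤ r a₀ / 2 + r a₀ / 2 := by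
          exact add_le_add le_rfl (Finset.inf'_le _ ha₀)
      _ = r a₀ := by ring
  calc dist (f a) (f b) ≤ dist (f a) (f a₀) + dist (f a₀) (f b) := dist_triangle _ _ _
    _ < ε / 2 + ε / 2 := by
        refine add_lt_add ?_ (hrp _ _ h2)
        rw [dist_comm]
        exact hrp _ _ (h1.trans_le (by linarith [hr0 a₀]))
    _ = ε := by ring

/-- A holomorphic map of complex manifolds that is a submersion at `y` admits a local
holomorphic section through `y`. -/
lemma exists_manifold_section {m n : ℕ} {Y X : Type*} [MetricSpace Y]
    [ChartedSpace (EuclideanSpace ℂ (Fin m)) Y]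
    [IsManifold 𝓘(ℂ, EuclideanSpace ℂ (Fin m)) (⊤ : ℕ∞) Y]
    [MetricSpace X] [ChartedSpace (EuclideanSpace ℂ (Fin n)) X]
    [IsManifold 𝓘(ℂ, EuclideanSpace ℂ (Fin n)) (⊤ : ℕ∞) X]
    (f : Y → X)
    (hf : MDifferentiable 𝓘(ℂ, EuclideanSpace ℂ (Fin m)) 𝓘(ℂ, EuclideanSpace ℂ (Fin n)) f)
    (y : Y)
    (hsurj : Function.Surjective
      (mfderiv 𝓘(ℂ, EuclideanSpace ℂ (Fin m)) 𝓘(ℂ, EuclideanSpace ℂ (Fin n)) f y)) :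
    ∃ (V : Set X) (s : X → Y), IsOpen V ∧ f y ∈ V ∧ s (f y) = y ∧
      MDifferentiableOn 𝓘(ℂ, EuclideanSpace ℂ (Fin n)) 𝓘(ℂ, EuclideanSpace ℂ (Fin m)) s V ∧
      ∀ v ∈ V, f (s v) = v := by
  set IM := 𝓘(ℂ, EuclideanSpace ℂ (Fin m))
  set IN := 𝓘(ℂ, EuclideanSpace ℂ (Fin n))
  set ψ := extChartAt IM y with hψdef
  set φ := extChartAt IN (f y) with hφdef
  set g : EuclideanSpace ℂ (Fin m) → EuclideanSpace ℂ (Fin n) :=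
    fun p => φ (f (ψ.symm p)) with hgdef
  set U : Set (EuclideanSpace ℂ (Fin m)) := ψ.target ∩ ψ.symm ⁻¹' (f ⁻¹' φ.source) with hUdef
  have hUopen : IsOpen U := by
    apply ContinuousOn.isOpen_inter_preimage (continuousOn_extChartAt_symm y)
      (isOpen_extChartAt_target y)
    exact (isOpen_extChartAt_source (f y)).preimage hf.continuous
  have hcU : ψ y ∈ U := by
    refine ⟨mem_extChartAt_target y, ?_⟩
    rw [mem_preimage]
    have hinv : ψ.symm (ψ y) = y := extChartAt_to_inv y
    rw [hinv]
    exact mem_extChartAt_source (I := IN) (f y)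
  -- differentiability of the coordinate representative
  have hsymm_md : MDifferentiableOn 𝓘(ℂ, EuclideanSpace ℂ (Fin m)) IM ψ.symm ψ.target :=
    mdifferentiableOn_extChartAt_symm (x := y)
  have hφ_md : MDifferentiableOn IN 𝓘(ℂ, EuclideanSpace ℂ (Fin n)) φ φ.source := by
    rw [hφdef, extChartAt_source]
    exact mdifferentiableOn_extChartAt
  have hg_md : MDifferentiableOn 𝓘(ℂ, EuclideanSpace ℂ (Fin m)) 𝓘(ℂ, EuclideanSpace ℂ (Fin n))
      g U := by
    have h1 : MDifferentiableOn 𝓘(ℂ, EuclideanSpace ℂ (Fin m)) IN (f ∘ ψ.symm) U :=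
      MDifferentiableOn.comp (hf.mdifferentiableOn (s := univ)) (hsymm_md.mono inter_subset_left)
        (fun p _ => mem_univ _)
    exact MDifferentiableOn.comp hφ_md h1 (fun p hp => hp.2)
  have hg_diff : DifferentiableOn ℂ g U := hg_md.differentiableOn
  -- surjectivity of the derivative of the representative
  have hwrit : writtenInExtChartAt IM IN y f = g := rfl
  have hmfd : mfderiv IM IN f y = fderiv ℂ g (ψ y) := by
    rw [(hf y).mfderiv, hwrit, IM.range_eq_univ, fderivWithin_univ]
  rw [hmfd] at hsurj
  obtain ⟨W, σ, hWopen, hgcW, hσgc, hσ⟩ :=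
    exists_local_holomorphic_section hUopen hg_diff hcU hsurj
  have hgψy : g (ψ y) = φ (f y) := by
    have hinv : ψ.symm (ψ y) = y := extChartAt_to_inv y
    rw [hgdef]
    simp only [hinv]
  -- the section at manifold level
  refine ⟨φ.source ∩ φ ⁻¹' W, fun v => ψ.symm (σ (φ v)), ?_, ?_, ?_, ?_, ?_⟩
  · have hφc : ContinuousOn φ φ.source := continuousOn_extChartAt (f y)
    exact ContinuousOn.isOpen_inter_preimage hφc (isOpen_extChartAt_source (f y)) hWopen
  · exact ⟨mem_extChartAt_source (f y), by rw [mem_preimage, ← hgψy]; exact hgcW⟩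
  · show ψ.symm (σ (φ (f y))) = y
    rw [← hgψy, hσgc]
    exact extChartAt_to_inv y
  · -- differentiability of the section
    have hσ_md : MDifferentiableOn 𝓘(ℂ, EuclideanSpace ℂ (Fin n))
        𝓘(ℂ, EuclideanSpace ℂ (Fin m)) σ W := by
      apply DifferentiableOn.mdifferentiableOn
      exact fun v hv => ((hσ v hv).2.2).differentiableWithinAt
    have hmid : MDifferentiableOn IN 𝓘(ℂ, EuclideanSpace ℂ (Fin m)) (σ ∘ φ)
        (φ.source ∩ φ ⁻¹' W) :=
      MDifferentiableOn.comp hσ_md (hφ_md.mono inter_subset_left) (fun p hp => hp.2)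
    have : MDifferentiableOn IN IM (ψ.symm ∘ (σ ∘ φ)) (φ.source ∩ φ ⁻¹' W) :=
      MDifferentiableOn.comp hsymm_md hmid (fun p hp => ((hσ _ hp.2).1).1)
    exact this
  · intro v hv
    have hp := hσ (φ v) hv.2
    have hfp : f (ψ.symm (σ (φ v))) ∈ φ.source := hp.1.2
    have : φ (f (ψ.symm (σ (φ v)))) = φ v := hp.2.1
    have := congrArg φ.symm this
    rwa [φ.left_inv hfp, φ.left_inv hv.1] at this

end Aux

/-- If a complex manifold `X` is strongly dominable by LSAP manifolds,
then `X` is an LSAP manifold.  In particular, if `Z` is an LSAP manifold and `Z → X` is a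
surjective holomorphic submersion, then `X` is an LSAP manifold. -/
theorem hasLSAP_of_strongly_dominable :
    (∀ (n : ℕ) (X : Type) [MetricSpace X] [ChartedSpace (EuclideanSpace ℂ (Fin n)) X]
      [IsManifold 𝓘(ℂ, EuclideanSpace ℂ (Fin n)) (⊤ : ℕ∞) X],
      (∀ x : X, Nonempty (LSAPDominationAt n X x)) →
      HasLSAP (X := X) 𝓘(ℂ, EuclideanSpace ℂ (Fin n))) ∧
    (∀ (m n : ℕ) (Z X : Type) [MetricSpace Z] [ChartedSpace (EuclideanSpace ℂ (Fin m)) Z]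
      [IsManifold 𝓘(ℂ, EuclideanSpace ℂ (Fin m)) (⊤ : ℕ∞) Z]
      [MetricSpace X] [ChartedSpace (EuclideanSpace ℂ (Fin n)) X]
      [IsManifold 𝓘(ℂ, EuclideanSpace ℂ (Fin n)) (⊤ : ℕ∞) X],
      HasLSAP (X := Z) 𝓘(ℂ, EuclideanSpace ℂ (Fin m)) →
      ∀ h : Z → X,
        MDifferentiable 𝓘(ℂ, EuclideanSpace ℂ (Fin m)) 𝓘(ℂ, EuclideanSpace ℂ (Fin n)) h →
        Function.Surjective h →
        (∀ z : Z, Function.Surjective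
          (mfderiv 𝓘(ℂ, EuclideanSpace ℂ (Fin m)) 𝓘(ℂ, EuclideanSpace ℂ (Fin n)) h z)) →
        HasLSAP (X := X) 𝓘(ℂ, EuclideanSpace ℂ (Fin n))) := by
  have part1 : ∀ (n : ℕ) (X : Type) [MetricSpace X]
      [ChartedSpace (EuclideanSpace ℂ (Fin n)) X]
      [IsManifold 𝓘(ℂ, EuclideanSpace ℂ (Fin n)) (⊤ : ℕ∞) X],
      (∀ x : X, Nonempty (LSAPDominationAt n X x)) →
      HasLSAP (X := X) 𝓘(ℂ, EuclideanSpace ℂ (Fin n)) := by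
    intro n X _ _ _ hdom x
    obtain ⟨d⟩ := hdom x
    letI := d.iY; letI := d.cY; letI := d.sY
    have hsect := exists_manifold_section d.f d.holo d.y d.subm
    rw [d.eq] at hsect
    obtain ⟨V, s, hVopen, hxV, hsx, hs_md, hsec⟩ := hsect
    obtain ⟨WY, hWYopen, hyWY, hYprop⟩ := d.lsap d.y
    refine ⟨V ∩ s ⁻¹' WY,
      ContinuousOn.isOpen_inter_preimage hs_md.continuousOn hVopen hWYopen,
      ⟨hxV, by rw [Set.mem_preimage, hsx]; exact hyWY⟩, ?_⟩
    intro D D' hpair N F Ω hΩopen hΩsub hF hFV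
    set F' : ℂ × EuclideanSpace ℂ (Fin N) → d.Y := fun p => s (F p) with hF'def
    have hF'md : MDifferentiableOn 𝓘(ℂ, ℂ × EuclideanSpace ℂ (Fin N))
        𝓘(ℂ, EuclideanSpace ℂ (Fin d.m)) F' Ω :=
      MDifferentiableOn.comp hs_md hF (fun p hp => (hFV p hp).1)
    have hF'W : ∀ p ∈ Ω, F' p ∈ WY := fun p hp => (hFV p hp).2
    obtain ⟨r, hr0, hr1, happ⟩ := hYprop D D' hpair N F' Ω hΩopen hΩsub hF'md hF'W
    refine ⟨r, hr0, hr1, ?_⟩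
    intro ε hε
    have hDcomp : IsCompact D := hpair.1.1
    have hDK : IsCompact (D ×ˢ Metric.closedBall (0 : EuclideanSpace ℂ (Fin N)) r) :=
      hDcomp.prod (isCompact_closedBall _ _)
    have hsubΩ : D ×ˢ Metric.closedBall (0 : EuclideanSpace ℂ (Fin N)) r ⊆ Ω := by
      refine subset_trans (fun p hp => ?_) hΩsub
      exact ⟨hp.1, Metric.closedBall_subset_ball hr1 hp.2⟩
    have hK : IsCompact (F' '' (D ×ˢ Metric.closedBall (0 : EuclideanSpace ℂ (Fin N)) r)) :=
      hDK.image_of_continuousOn (hF'md.continuousOn.mono hsubΩ)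
    obtain ⟨δ, hδ0, hδ⟩ := exists_forall_dist_image_lt d.holo.continuous hK hε
    obtain ⟨G', Ω', hΩ'open, hΩ'sub, hG'md, hG'close⟩ := happ δ hδ0
    refine ⟨fun p => d.f (G' p), Ω', hΩ'open, hΩ'sub, ?_, ?_⟩
    · exact MDifferentiableOn.comp (d.holo.mdifferentiableOn (s := Set.univ)) hG'md
        (fun p _ => Set.mem_univ _)
    · intro p hp
      have h1 : F p ∈ V ∩ s ⁻¹' WY := hFV p (hsubΩ hp)
      have h2 : d.f (F' p) = F p := hsec _ h1.1
      have h3 := hδ (F' p) (Set.mem_image_of_mem F' hp) (G' p) (hG'close p hp)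
      rwa [h2] at h3
  refine ⟨part1, ?_⟩
  intro m n Z X _ _ _ _ _ _ hZ h hmd hsurj hsubm
  apply part1
  intro x
  obtain ⟨z, hz⟩ := hsurj x
  exact ⟨⟨m, Z, hZ, h, z, hmd, hz, hsubm z⟩⟩
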